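/- Let L ≥ 3 and let 𝔡_PBC be the Lie algebra over ℝ generated by {i·Z_j : 1 ≤ j ≤ L} ∪ {i·X_j·X_{j+1} : 1 ≤ j ≤ L−1} ∪ {i·X_L·X_1} inside the 2^L × 2^L complex matrices. Then every element H ∈ 𝔡_PBC commutes with the parity operator: H·P = P·H. -/

import Mathlib

open Matrix

noncomputable section

/-- The Pauli matrix X. -/
def PX : Matrix (Fin 2) (Fin 2) ℂ := !![0, 1; 1, 0]
/-- The Pauli matrix Y. -/
def PY : Matrix (Fin 2) (Fin 2) ℂ := !![0, -Complex.I; Complex.I, 0]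
/-- The Pauli matrix Z. -/
def PZ : Matrix (Fin 2) (Fin 2) ℂ := !![1, 0; 0, -1]

/-- The operator `M_j = I₂^{⊗ j} ⊗ M ⊗ I₂^{⊗ (L-1-j)}` acting as `M` on site `j` and as the
identity elsewhere, on `(ℂ²)^{⊗ L} ≅ ℂ^{2^L}` whose standard basis is indexed by functions
`v : Fin L → Fin 2`. -/
def site (L : ℕ) (M : Matrix (Fin 2) (Fin 2) ℂ) (j : Fin L) :
    Matrix (Fin L → Fin 2) (Fin L → Fin 2) ℂ :=
  fun v w => ∏ k : Fin L, if k = j then M (v k) (w k) else (if v k = w k then 1 else 0)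

/-- The Pauli string `T^{AB}_{j,k} = A_j · Z_{j+1} · Z_{j+2} ⋯ Z_{k-1} · B_k`. -/
def pauliString (L : ℕ) (A B : Matrix (Fin 2) (Fin 2) ℂ) (j k : Fin L) :
    Matrix (Fin L → Fin 2) (Fin L → Fin 2) ℂ :=
  site L A j *
    (((List.finRange L).filter (fun m => j < m ∧ m < k)).map (site L PZ)).prod *
    site L B k

/-- The parity operator `P = Z_1 · Z_2 ⋯ Z_L`. -/
def parity (L : ℕ) : Matrix (Fin L → Fin 2) (Fin L → Fin 2) ℂ :=
  ((List.finRange L).map (site L PZ)).prod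

/-- The generators of the site-dependent protocol with open boundary conditions:
`{i·Z_j : 1 ≤ j ≤ L} ∪ {i·X_j·X_{j+1} : 1 ≤ j ≤ L-1}`. -/
def depGenOBC (L : ℕ) : Set (Matrix (Fin L → Fin 2) (Fin L → Fin 2) ℂ) :=
  {M | ∃ j : Fin L, M = Complex.I • site L PZ j} ∪
  {M | ∃ (j : ℕ) (h : j + 1 < L),
    M = Complex.I • (site L PX ⟨j, by omega⟩ * site L PX ⟨j + 1, h⟩)}

/-- The generators of the site-dependent protocol with periodic boundary conditions:
the OBC generators together with `i·X_L·X_1`. -/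
def depGenPBC (L : ℕ) (hL : 0 < L) : Set (Matrix (Fin L → Fin 2) (Fin L → Fin 2) ℂ) :=
  depGenOBC L ∪
    {Complex.I • (site L PX ⟨L - 1, by omega⟩ * site L PX ⟨0, hL⟩)}

attribute [local instance 100] LieRing.ofAssociativeRing

/-!
`P` is diagonal in the computational basis, with entry `∏ₖ (±1)` at `|v⟩`. Each `Z_j` is diagonal
too, so it commutes with `P`, while `X_j` flips exactly one spin, so it anticommutes with `P`;
hence every product `X_j X_k` commutes with `P`. The centralizer of `P` is an associative
subalgebra, hence a Lie subalgebra, and it contains all the generators of `𝔡_PBC`.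
-/

theorem commute_mul_of_anticommute {R : Type*} [Semigroup R] [HasDistribNeg R] {a b p : R}
    (ha : a * p = -(p * a)) (hb : b * p = -(p * b)) : Commute (a * b) p := by
  rw [Commute, SemiconjBy, mul_assoc, hb, mul_neg, ← mul_assoc, ha, neg_mul, neg_neg,
    mul_assoc]

theorem mem_lieSubalgebraOfSubalgebra_centralizer_singleton {R A : Type*} [CommRing R] [Ring A]
    [Algebra R A] {p a : A} :
    a ∈ lieSubalgebraOfSubalgebra R A (Subalgebra.centralizer R {p}) ↔ Commute a p := by
  change a ∈ Subalgebra.centralizer R {p} ↔ _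
  simp [Subalgebra.mem_centralizer_iff, Commute, SemiconjBy, eq_comm]

section Site

variable {L : ℕ}

theorem site_apply_eq_zero_of_ne (M : Matrix (Fin 2) (Fin 2) ℂ) {j k : Fin L} (hkj : k ≠ j)
    {v w : Fin L → Fin 2} (hvw : v k ≠ w k) : site L M j v w = 0 :=
  Finset.prod_eq_zero (Finset.mem_univ k) (by simp [hkj, hvw])

theorem site_diagonal (d : Fin 2 → ℂ) (j : Fin L) :
    site L (diagonal d) j = diagonal fun v => d (v j) := by
  ext v w
  by_cases hvw : v = w
  · subst hvw
    rw [diagonal_apply_eq, site, Finset.prod_eq_single j (fun k _ hk => by simp [hk]) (by simp)]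
    simp
  · obtain ⟨k, hk⟩ := Function.ne_iff.mp hvw
    rw [diagonal_apply_ne _ hvw]
    by_cases hkj : k = j
    · subst hkj
      exact Finset.prod_eq_zero (Finset.mem_univ k) (by simp [diagonal_apply_ne _ hk])
    · exact site_apply_eq_zero_of_ne _ hkj hk

/-- The eigenvalue `±1` of `Z` on the basis vector `|a⟩`. -/
def zSign : Fin 2 → ℂ := ![1, -1]

theorem PZ_eq_diagonal : PZ = diagonal zSign := by
  ext a b
  fin_cases a <;> fin_cases b <;> rfl

theorem zSign_eq_neg {a b : Fin 2} (h : a ≠ b) : zSign a = -zSign b := by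
  fin_cases a <;> fin_cases b <;> simp_all [zSign]

theorem parity_eq_diagonal : parity L = diagonal fun v => ∏ k, zSign (v k) := by
  have hlist : ∀ l : List (Fin L),
      (l.map (site L PZ)).prod = diagonal fun v => (l.map fun k => zSign (v k)).prod := by
    intro l
    induction l with
    | nil => simp
    | cons j t ih =>
      rw [List.map_cons, List.prod_cons, ih, PZ_eq_diagonal, site_diagonal,
        diagonal_mul_diagonal]
      simp only [List.map_cons, List.prod_cons]
  rw [parity, hlist]
  simp only [Fin.prod_univ_def]

theorem PX_apply_self (a : Fin 2) : PX a a = 0 := by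
  fin_cases a <;> rfl

theorem commute_site_PZ_parity (j : Fin L) : Commute (site L PZ j) (parity L) := by
  rw [parity_eq_diagonal, PZ_eq_diagonal, site_diagonal]
  exact commute_diagonal _ _

/-- `X_j` flips the `j`-th spin, hence flips the sign of `P`. -/
theorem site_PX_mul_parity (j : Fin L) :
    site L PX j * parity L = -(parity L * site L PX j) := by
  rw [parity_eq_diagonal]
  ext v w
  rw [mul_diagonal, neg_apply, diagonal_mul]
  by_cases hX : site L PX j v w = 0
  · simp [hX]
  have hflip : w j ≠ v j := fun h => hX <|
    Finset.prod_eq_zero (Finset.mem_univ j) (by rw [if_pos rfl, h, PX_apply_self])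
  have hsame : ∀ k ≠ j, w k = v k := fun k hk => by
    by_contra h
    exact hX (site_apply_eq_zero_of_ne _ hk (Ne.symm h))
  have hsign : ∏ k, zSign (w k) = -∏ k, zSign (v k) := by
    rw [← Finset.mul_prod_erase _ _ (Finset.mem_univ j),
      ← Finset.mul_prod_erase _ (fun k => zSign (v k)) (Finset.mem_univ j),
      Finset.prod_congr rfl fun k hk => by rw [hsame k (Finset.ne_of_mem_erase hk)],
      zSign_eq_neg hflip, neg_mul]
  rw [hsign]
  ring

end Site

/-- For `L ≥ 3`, every element of the Lie algebra `𝔡_PBC` generated over `ℝ` by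
`{i·Z_j} ∪ {i·X_j X_{j+1}} ∪ {i·X_L X_1}` commutes with the parity operator `P`. -/
theorem dep_pbc_commutes_parity (L : ℕ) (hL : 3 ≤ L) :
    ∀ H ∈ LieSubalgebra.lieSpan ℝ (Matrix (Fin L → Fin 2) (Fin L → Fin 2) ℂ)
        (depGenPBC L (by omega)),
      H * parity L = parity L * H := by
  have hXX (j k : Fin L) : Commute (Complex.I • (site L PX j * site L PX k)) (parity L) :=
    (commute_mul_of_anticommute (site_PX_mul_parity j) (site_PX_mul_parity k)).smul_left _
  have hgen : depGenPBC L (by omega) ⊆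
      lieSubalgebraOfSubalgebra ℝ _ (Subalgebra.centralizer ℝ {parity L}) := by
    rintro M ((⟨j, rfl⟩ | ⟨j, -, rfl⟩) | rfl) <;>
      refine mem_lieSubalgebraOfSubalgebra_centralizer_singleton.mpr ?_
    · exact (commute_site_PZ_parity j).smul_left _
    · exact hXX _ _
    · exact hXX _ _
  intro H hH
  exact (mem_lieSubalgebraOfSubalgebra_centralizer_singleton.mp
    (LieSubalgebra.lieSpan_le.mpr hgen hH)).eq
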